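/- arXiv:1603.03788 — 2 statements merged into one kernel-verified Lean document; each statement's English description precedes it below -/
import Mathlib

section
/- (Chen's identity, coefficient form) Let X : [a,b] → ℝ^d and Y : [b,c] → ℝ^d be continuously differentiable paths, and let X ∗ Y : [a,c] → ℝ^d be their concatenation: (X∗Y)_t = X_t for t ∈ [a,b] and (X∗Y)_t = X_b + (Y_t − Y_b) for t ∈ [b,c]. Then for every k ≥ 1 and every word (i₁,…,i_k) with letters in {1,…,d}: S(X∗Y)^{i₁,…,i_k}_{a,c} = Σ_{j=0}^{k} S(X)^{i₁,…,i_j}_{a,b} · S(Y)^{i_{j+1},…,i_k}_{b,c}, where the terms with j = 0 and j = k involve the empty-word convention S^∅ = 1. -/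
/-!
Away from the null hyperplanes `t i = b`, the simplex `a < t₁ < ⋯ < t_k < c` is the disjoint union,
over `j ≤ k`, of the pieces on which exactly the first `j` times lie before `b`. On the `j`-th piece
the derivative of `X ∗ Y` at `tᵢ` is that of `X` for `i < j` and that of `Y` for `i ≥ j`, and the
piece is the product of the `j`-simplex over `(a, b)` with the `(k - j)`-simplex over `(b, c)`, so
Fubini splits its integral into `S(X)^{i₁,…,i_j} · S(Y)^{i_{j+1},…,i_k}`.
-/

open MeasureTheory

/-- The `k`-fold iterated integral (signature coefficient) of a path
`X : ℝ → (Fin d → ℝ)` over `[a,b]` along the word `w`, defined as the Lebesgue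
integral of `∏ i, (X^{w i})'(t i)` over the simplex `a < t₁ < ⋯ < t_k < b`.
For the empty word (`k = 0`) this equals `1` by convention. -/
noncomputable def sigTerm {d : ℕ} (X : ℝ → Fin d → ℝ) (a b : ℝ) {k : ℕ}
    (w : Fin k → Fin d) : ℝ :=
  ∫ t in {t : Fin k → ℝ | StrictMono t ∧ ∀ i, t i ∈ Set.Ioo a b},
    ∏ i, deriv (fun s => X s (w i)) (t i)

open Finset Function Topology

def orderedSimplex (a b : ℝ) (k : ℕ) : Set (Fin k → ℝ) :=
  {t | StrictMono t ∧ ∀ i, t i ∈ Set.Ioo a b}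

def chenPiece (a b c : ℝ) (k p : ℕ) : Set (Fin k → ℝ) :=
  {t | StrictMono t ∧ (∀ i : Fin k, (i : ℕ) < p → t i ∈ Set.Ioo a b) ∧
    ∀ i : Fin k, p ≤ (i : ℕ) → t i ∈ Set.Ioo b c}

section Combinatorics

variable {a b c : ℝ} {k p q : ℕ}

theorem Monotone.lt_card_filter_lt_iff {α : Type*} [LinearOrder α] {t : Fin k → α}
    (ht : Monotone t) (b : α) (i : Fin k) : (i : ℕ) < #{j | t j < b} ↔ t i < b := by
  constructor
  · intro hi
    by_contra hbi
    have hsub : ({j | t j < b} : Finset (Fin k)) ⊆ Iio i := fun j hj =>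
      mem_Iio.2 (ht.reflect_lt ((mem_filter.1 hj).2.trans_le (not_lt.1 hbi)))
    exact (card_le_card hsub |>.trans_eq (Fin.card_Iio i)).not_gt hi
  · intro hbi
    have hsub : Iic i ⊆ ({j | t j < b} : Finset (Fin k)) := fun j hj =>
      mem_filter.2 ⟨mem_univ j, (ht (mem_Iic.1 hj)).trans_lt hbi⟩
    exact (Fin.card_Iic i).symm.trans_le (card_le_card hsub)

theorem mem_chenPiece_iff {t : Fin (p + q) → ℝ} :
    t ∈ chenPiece a b c (p + q) p ↔
      (fun i => t (Fin.castAdd q i)) ∈ orderedSimplex a b p ∧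
        (fun i => t (Fin.natAdd p i)) ∈ orderedSimplex b c q := by
  constructor
  · rintro ⟨ht, hleft, hright⟩
    exact ⟨⟨ht.comp (Fin.strictMono_castAdd q), fun i => hleft _ i.isLt⟩,
      ⟨ht.comp (Fin.strictMono_natAdd p), fun i => hright _ (Nat.le_add_right p i)⟩⟩
  · rintro ⟨⟨hu, hua⟩, hv, hvb⟩
    have hleft (i : Fin (p + q)) (hi : (i : ℕ) < p) : t i ∈ Set.Ioo a b := hua ⟨i, hi⟩
    have hright (i : Fin (p + q)) (hi : p ≤ (i : ℕ)) : t i ∈ Set.Ioo b c := by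
      obtain ⟨j, rfl⟩ : ∃ j : Fin q, Fin.natAdd p j = i :=
        ⟨⟨i - p, by omega⟩, Fin.ext (by simp; omega)⟩
      exact hvb j
    refine ⟨fun i j hij => ?_, hleft, hright⟩
    induction i using Fin.addCases with
    | left i =>
      induction j using Fin.addCases with
      | left j => exact hu ((Fin.strictMono_castAdd q).lt_iff_lt.1 hij)
      | right j => exact (hua i).2.trans (hvb j).1
    | right i =>
      induction j using Fin.addCases with
      | left j => simp [Fin.lt_def] at hij; omega
      | right j => exact hv ((Fin.strictMono_natAdd p).lt_iff_lt.1 hij)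

theorem chenPiece_subset_orderedSimplex (hab : a ≤ b) (hbc : b ≤ c) :
    chenPiece a b c k p ⊆ orderedSimplex a c k := by
  rintro t ⟨ht, hleft, hright⟩
  refine ⟨ht, fun i => ?_⟩
  rcases lt_or_ge (i : ℕ) p with hi | hi
  · exact ⟨(hleft i hi).1, (hleft i hi).2.trans_le hbc⟩
  · exact ⟨hab.trans_lt (hright i hi).1, (hright i hi).2⟩

theorem pairwise_disjoint_chenPiece :
    Pairwise (Disjoint on fun p : Fin (k + 1) => chenPiece a b c k p) := by
  refine (pairwise_disjoint_on _).2 fun p p' hpp' => Set.disjoint_left.2 ?_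
  rintro t ⟨-, -, hright⟩ ⟨-, hleft', -⟩
  have hp : (p : ℕ) < k := by omega
  exact (hright ⟨p, hp⟩ le_rfl).1.not_gt (hleft' ⟨p, hp⟩ hpp').2

theorem orderedSimplex_diff_subset_iUnion_chenPiece :
    orderedSimplex a c k \ ⋃ i, {t | t i = b} ⊆ ⋃ p : Fin (k + 1), chenPiece a b c k p := by
  rintro t ⟨⟨ht, hac⟩, hb⟩
  simp only [Set.mem_iUnion, Set.mem_ofPred_eq, not_exists] at hb
  have hcard : #{i | t i < b} < k + 1 := Nat.lt_succ_of_le (card_le_univ _ |>.trans_eq (by simp))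
  have hbefore := ht.monotone.lt_card_filter_lt_iff b
  refine Set.mem_iUnion.2 ⟨⟨_, hcard⟩, ht, fun i hi => ⟨(hac i).1, (hbefore i).1 hi⟩,
    fun i hi => ⟨lt_of_le_of_ne ?_ (Ne.symm (hb i)), (hac i).2⟩⟩
  exact not_lt.1 fun h => not_lt.2 hi ((hbefore i).2 h)

end Combinatorics

section Measure

variable {a b c : ℝ} {k p q : ℕ}

theorem measurableSet_setOf_strictMono : MeasurableSet {t : Fin k → ℝ | StrictMono t} := by
  simp only [StrictMono, Set.ofPred_forall]
  exact .iInter fun i => .iInter fun j => .iInter fun _ =>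
    measurableSet_lt (measurable_pi_apply i) (measurable_pi_apply j)

theorem measurableSet_orderedSimplex : MeasurableSet (orderedSimplex a b k) := by
  simp only [orderedSimplex, Set.ofPred_and, Set.ofPred_forall]
  exact measurableSet_setOf_strictMono.inter <|
    .iInter fun i => measurable_pi_apply i measurableSet_Ioo

theorem measurableSet_chenPiece : MeasurableSet (chenPiece a b c k p) := by
  simp only [chenPiece, Set.ofPred_and, Set.ofPred_forall]
  exact measurableSet_setOf_strictMono.inter <|
    (MeasurableSet.iInter fun i => .iInter fun _ => measurable_pi_apply i measurableSet_Ioo).inter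
    (MeasurableSet.iInter fun i => .iInter fun _ => measurable_pi_apply i measurableSet_Ioo)

theorem orderedSimplex_ae_eq_iUnion_chenPiece (hab : a ≤ b) (hbc : b ≤ c) :
    orderedSimplex a c k =ᵐ[volume] ⋃ p : Fin (k + 1), chenPiece a b c k p := by
  have hnull : volume (⋃ i : Fin k, {t : Fin k → ℝ | t i = b}) = 0 :=
    measure_iUnion_null fun i => by
      rw [volume_pi]
      exact Measure.pi_hyperplane (fun _ : Fin k => (volume : Measure ℝ)) i b
  exact (ae_le_set.2 <| measure_mono_null
      (Set.sdiff_subset_comm.1 orderedSimplex_diff_subset_iUnion_chenPiece) hnull).antisymm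
    (Set.iUnion_subset fun _ => chenPiece_subset_orderedSimplex hab hbc).eventuallyLE

theorem setIntegral_orderedSimplex_eq_sum_chenPiece (hab : a ≤ b) (hbc : b ≤ c)
    {f : (Fin k → ℝ) → ℝ} (hf : ∀ p : Fin (k + 1), IntegrableOn f (chenPiece a b c k p)) :
    ∫ t in orderedSimplex a c k, f t = ∑ p : Fin (k + 1), ∫ t in chenPiece a b c k p, f t := by
  rw [setIntegral_congr_set (orderedSimplex_ae_eq_iUnion_chenPiece hab hbc),
    integral_iUnion_fintype (fun _ => measurableSet_chenPiece) pairwise_disjoint_chenPiece hf]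

theorem setIntegral_chenPiece_prod (h : Fin (p + q) → ℝ → ℝ) :
    ∫ t in chenPiece a b c (p + q) p, ∏ i, h i (t i) =
      (∫ u in orderedSimplex a b p, ∏ i, h (Fin.castAdd q i) (u i)) *
        ∫ v in orderedSimplex b c q, ∏ i, h (Fin.natAdd p i) (v i) := by
  let ψ : (Fin (p + q) → ℝ) ≃ᵐ (Fin p → ℝ) × (Fin q → ℝ) :=
    (MeasurableEquiv.piCongrLeft (fun _ => ℝ) finSumFinEquiv).symm.trans
      (MeasurableEquiv.sumPiEquivProdPi _)
  have hψ : MeasurePreserving ψ :=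
    ((volume_measurePreserving_piCongrLeft _ _).symm _).trans
      (volume_measurePreserving_sumPiEquivProdPi _)
  have hψ_apply (t : Fin (p + q) → ℝ) :
      ψ t = (fun i => t (Fin.castAdd q i), fun i => t (Fin.natAdd p i)) := rfl
  have hpiece :
      chenPiece a b c (p + q) p = ψ ⁻¹' (orderedSimplex a b p ×ˢ orderedSimplex b c q) := by
    ext t
    simp only [Set.mem_preimage, hψ_apply, Set.mem_prod, mem_chenPiece_iff]
  let F (u : Fin p → ℝ) := ∏ i, h (Fin.castAdd q i) (u i)
  let G (v : Fin q → ℝ) := ∏ i, h (Fin.natAdd p i) (v i)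
  have hprod (t : Fin (p + q) → ℝ) : ∏ i, h i (t i) = F (ψ t).1 * G (ψ t).2 :=
    Fin.prod_univ_add _
  simp_rw [hpiece, hprod]
  rw [hψ.setIntegral_preimage_emb ψ.measurableEmbedding (fun z => F z.1 * G z.2),
    Measure.volume_eq_prod]
  exact setIntegral_prod_mul F G _ _

end Measure

section Concatenation

variable {d : ℕ}

noncomputable def concatAt (X Y : ℝ → Fin d → ℝ) (b : ℝ) : ℝ → Fin d → ℝ :=
  fun t => if t ≤ b then X t else X b + (Y t - Y b)

theorem deriv_concatAt_of_lt (X Y : ℝ → Fin d → ℝ) {b s : ℝ} (hs : s < b) (m : Fin d) :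
    deriv (fun t => concatAt X Y b t m) s = deriv (fun t => X t m) s := by
  refine Filter.EventuallyEq.deriv_eq ?_
  filter_upwards [Iio_mem_nhds hs] with t ht
  simp [concatAt, (Set.mem_Iio.1 ht).le]

theorem deriv_concatAt_of_gt (X Y : ℝ → Fin d → ℝ) {b s : ℝ} (hs : b < s) (m : Fin d) :
    deriv (fun t => concatAt X Y b t m) s = deriv (fun t => Y t m) s := by
  have hloc : (fun t => concatAt X Y b t m) =ᶠ[𝓝 s] fun t => X b m + (Y t m - Y b m) := by
    filter_upwards [Ioi_mem_nhds hs] with t ht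
    simp [concatAt, not_le.2 (Set.mem_Ioi.1 ht)]
  rw [hloc.deriv_eq, deriv_const_add, deriv_sub_const]

theorem ContDiff.continuous_deriv_apply {X : ℝ → Fin d → ℝ} (hX : ContDiff ℝ 1 X) (m : Fin d) :
    Continuous (deriv fun s => X s m) :=
  ((contDiff_apply ℝ ℝ m).comp hX).continuous_deriv le_rfl

variable {a b c : ℝ} {k p q : ℕ}

theorem prod_deriv_concatAt_eqOn_chenPiece (X Y : ℝ → Fin d → ℝ) (w : Fin k → Fin d) :
    Set.EqOn (fun t => ∏ i, deriv (fun s => concatAt X Y b s (w i)) (t i))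
      (fun t => ∏ i : Fin k,
        (if (i : ℕ) < p then deriv fun s => X s (w i) else deriv fun s => Y s (w i)) (t i))
      (chenPiece a b c k p) := by
  rintro t ⟨-, hleft, hright⟩
  refine prod_congr rfl fun i _ => ?_
  split_ifs with hi
  · exact deriv_concatAt_of_lt X Y (hleft i hi).2 (w i)
  · exact deriv_concatAt_of_gt X Y (hright i (not_lt.1 hi)).1 (w i)

theorem integrableOn_chenPiece_prod_deriv_concatAt (hab : a ≤ b) (hbc : b ≤ c)
    {X Y : ℝ → Fin d → ℝ} (hX : ContDiff ℝ 1 X) (hY : ContDiff ℝ 1 Y) (w : Fin k → Fin d) :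
    IntegrableOn (fun t => ∏ i, deriv (fun s => concatAt X Y b s (w i)) (t i))
      (chenPiece a b c k p) := by
  have hcont : Continuous fun t : Fin k → ℝ => ∏ i : Fin k,
      (if (i : ℕ) < p then deriv fun s => X s (w i) else deriv fun s => Y s (w i)) (t i) := by
    refine continuous_finsetProd _ fun i _ => ?_
    split_ifs
    · exact (hX.continuous_deriv_apply (w i)).comp (continuous_apply i)
    · exact (hY.continuous_deriv_apply (w i)).comp (continuous_apply i)
  have hbox : chenPiece a b c k p ⊆ Set.univ.pi fun _ => Set.Icc a c := fun t ht =>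
    Set.mem_univ_pi.2 fun i =>
      Set.Ioo_subset_Icc_self ((chenPiece_subset_orderedSimplex hab hbc ht).2 i)
  have hbox_int : IntegrableOn _ (Set.univ.pi fun _ : Fin k => Set.Icc a c) :=
    hcont.continuousOn.integrableOn_compact (isCompact_univ_pi fun _ => isCompact_Icc)
  exact (hbox_int.mono_set hbox).congr_fun
    (prod_deriv_concatAt_eqOn_chenPiece X Y w).symm measurableSet_chenPiece

theorem setIntegral_chenPiece_prod_deriv_concatAt (hpq : p + q = k) (X Y : ℝ → Fin d → ℝ)
    (w : Fin k → Fin d) :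
    ∫ t in chenPiece a b c k p, ∏ i, deriv (fun s => concatAt X Y b s (w i)) (t i) =
      sigTerm X a b (fun i : Fin p => w ⟨i, by omega⟩) *
        sigTerm Y b c (fun i : Fin q => w ⟨p + i, by omega⟩) := by
  subst hpq
  rw [setIntegral_congr_fun measurableSet_chenPiece (prod_deriv_concatAt_eqOn_chenPiece X Y w),
    setIntegral_chenPiece_prod]
  simp only [Fin.val_castAdd, Fin.val_natAdd, Fin.is_lt, if_true, add_lt_iff_neg_left,
    not_lt_zero, if_false]
  rfl

end Concatenation

/-- Chen's identity in coefficient form: the iterated integral of the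
concatenation `X ∗ Y` along a word of length `k` equals
`Σ_{j=0}^k S(X)^{i₁,…,i_j}_{a,b} · S(Y)^{i_{j+1},…,i_k}_{b,c}`,
with the empty-word convention for `j = 0` and `j = k`. -/
theorem sigTerm_chen {d : ℕ} (a b c : ℝ) (hab : a ≤ b) (hbc : b ≤ c)
    (X Y : ℝ → Fin d → ℝ) (hX : ContDiff ℝ 1 X) (hY : ContDiff ℝ 1 Y)
    (k : ℕ) (w : Fin k → Fin d) :
    sigTerm (fun t => if t ≤ b then X t else X b + (Y t - Y b)) a c w =
      ∑ j : Fin (k + 1),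
        sigTerm X a b
            (fun i : Fin (j : ℕ) => w ⟨i.1, by have h1 := i.isLt; have h2 := j.isLt; omega⟩) *
          sigTerm Y b c
            (fun i : Fin (k - (j : ℕ)) => w ⟨(j : ℕ) + i.1, by have h1 := i.isLt; omega⟩) := by
  calc sigTerm (concatAt X Y b) a c w
      = ∑ j : Fin (k + 1), ∫ t in chenPiece a b c k j,
          ∏ i, deriv (fun s => concatAt X Y b s (w i)) (t i) :=
        setIntegral_orderedSimplex_eq_sum_chenPiece hab hbc fun _ =>
          integrableOn_chenPiece_prod_deriv_concatAt hab hbc hX hY w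
    _ = _ := sum_congr rfl fun j _ =>
        setIntegral_chenPiece_prod_deriv_concatAt (Nat.add_sub_cancel' j.is_le) X Y w
end

section
/- (Second-level signature of the cumulative-sum lead-lag embedding) Let N ≥ 1 and x₁, …, x_N ∈ ℝ. Define the cumulative sums x̃₀ = 0 and x̃_i = x₁ + ⋯ + x_i for 1 ≤ i ≤ N, and let Z : [0, 2N] → ℝ² be the lead-lag path of (x̃₀,…,x̃_N): the piecewise linear path through Z_{2i} = (x̃_i, x̃_i) for 0 ≤ i ≤ N and Z_{2i+1} = (x̃_{i+1}, x̃_i) for 0 ≤ i ≤ N−1, linear on each [m, m+1]. Then: S(Z)^1_{0,2N} = S(Z)^2_{0,2N} = Σ_{i=1}^N x_i; S(Z)^{1,1}_{0,2N} = S(Z)^{2,2}_{0,2N} = ½(Σ_{i=1}^N x_i)²; S(Z)^{1,2}_{0,2N} = ½[(Σ_{i=1}^N x_i)² + Σ_{i=1}^N x_i²]; and S(Z)^{2,1}_{0,2N} = ½[(Σ_{i=1}^N x_i)² − Σ_{i=1}^N x_i²]. -/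
open MeasureTheory

/-- The lead-lag path of a sequence `x₀, x₁, …`: the piecewise linear path in
`ℝ²` through the vertices `Z_{2i} = (x_i, x_i)` and `Z_{2i+1} = (x_{i+1}, x_i)`,
linear on each interval `[m, m+1]` (first coordinate: lead, second: lag). -/
noncomputable def leadLagPath (x : ℕ → ℝ) : ℝ → Fin 2 → ℝ := fun t =>
  ![x ((⌊t⌋₊ + 1) / 2), x (⌊t⌋₊ / 2)] +
    (t - (⌊t⌋₊ : ℝ)) •
      (![x ((⌊t⌋₊ + 2) / 2), x ((⌊t⌋₊ + 1) / 2)] - ![x ((⌊t⌋₊ + 1) / 2), x (⌊t⌋₊ / 2)])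

/-! The lead-lag path is piecewise linear, so its signature reduces to finite sums. Level one
is the fundamental theorem of calculus; by Fubini on the triangle `s < t`, the level-two term
of coordinates `u, w` over `[0, n]` is `∑ₘ (uₘ₊₁ - uₘ) (wₙ - (wₘ + wₘ₊₁) / 2)`, each segment being
integrated exactly. Telescoping this sum gives `S^{jj} = (S^j)² / 2` and the shuffle relation
`S^{01} + S^{10} = S^0 S^1`. On each pair of lead-lag segments only one coordinate moves, first
the lead and then the lag, so the Lévy area `S^{01} - S^{10}` is the quadratic variation
`∑ (yᵢ₊₁ - yᵢ)²`. -/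
open Set

section IteratedIntegral

variable {d : ℕ} (X : ℝ → Fin d → ℝ) (a b : ℝ)

theorem sigTerm_singleton (j : Fin d) :
    sigTerm X a b ![j] = ∫ t in Ioo a b, deriv (fun s => X s j) t := by
  have hset : {t : Fin 1 → ℝ | StrictMono t ∧ ∀ i, t i ∈ Ioo a b}
      = MeasurableEquiv.funUnique (Fin 1) ℝ ⁻¹' Ioo a b := by
    ext t
    simp [Subsingleton.strictMono t]
  rw [sigTerm, hset, ← (volume_preserving_funUnique (Fin 1) ℝ).setIntegral_preimage_emb
    (MeasurableEquiv.funUnique (Fin 1) ℝ).measurableEmbedding]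
  simp only [MeasurableEquiv.funUnique_apply, Fin.default_eq_zero, Finset.univ_unique,
    Matrix.cons_val_fin_one, Finset.prod_singleton]
  rfl

theorem integral_triangle_mul {f g : ℝ → ℝ} (hf : IntegrableOn f (Ioo a b))
    (hg : IntegrableOn g (Ioo a b)) :
    ∫ p in Ioo a b ×ˢ Ioo a b ∩ {p : ℝ × ℝ | p.1 < p.2}, f p.1 * g p.2
      = ∫ s in Ioo a b, f s * ∫ t in Ioo s b, g t := by
  have hlt : MeasurableSet {p : ℝ × ℝ | p.1 < p.2} := measurableSet_lt measurable_fst measurable_snd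
  have hprod : Integrable (fun p : ℝ × ℝ => f p.1 * g p.2)
      ((volume.restrict (Ioo a b)).prod (volume.restrict (Ioo a b))) := hf.mul_prod hg
  rw [← setIntegral_indicator hlt, Measure.volume_eq_prod, ← Measure.prod_restrict,
    integral_prod _ (hprod.indicator hlt)]
  refine setIntegral_congr_fun measurableSet_Ioo fun s hs => ?_
  have hslice : (fun t => {p : ℝ × ℝ | p.1 < p.2}.indicator (fun p => f p.1 * g p.2) (s, t))
      = (Ioi s).indicator fun t => f s * g t := by
    ext t
    simp [indicator_apply]
  rw [hslice, integral_indicator measurableSet_Ioi, Measure.restrict_restrict measurableSet_Ioi,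
    Ioi_inter_Ioo, max_eq_left hs.1.le, integral_const_mul]

theorem sigTerm_pair (i j : Fin d) (hi : IntegrableOn (deriv fun s => X s i) (Ioo a b))
    (hj : IntegrableOn (deriv fun s => X s j) (Ioo a b)) :
    sigTerm X a b ![i, j]
      = ∫ s in Ioo a b, deriv (fun s => X s i) s * ∫ t in Ioo s b, deriv (fun s => X s j) t := by
  have hset : {t : Fin 2 → ℝ | StrictMono t ∧ ∀ i, t i ∈ Ioo a b}
      = MeasurableEquiv.finTwoArrow ⁻¹' (Ioo a b ×ˢ Ioo a b ∩ {p : ℝ × ℝ | p.1 < p.2}) := by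
    ext t
    simp only [Fin.strictMono_iff_lt_succ, Fin.forall_fin_one, Fin.castSucc_zero,
      Fin.succ_zero_eq_one, Fin.forall_fin_two, mem_ofPred_eq, mem_preimage, mem_inter_iff,
      mem_prod, MeasurableEquiv.finTwoArrow_apply]
    tauto
  rw [sigTerm, hset, ← integral_triangle_mul a b hi hj,
    ← (volume_preserving_finTwoArrow ℝ).setIntegral_preimage_emb
      MeasurableEquiv.finTwoArrow.measurableEmbedding]
  simp

end IteratedIntegral

noncomputable def pwLinear (v : ℕ → ℝ) (t : ℝ) : ℝ :=
  v ⌊t⌋₊ + (t - ⌊t⌋₊) * (v (⌊t⌋₊ + 1) - v ⌊t⌋₊)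

namespace pwLinear

variable (v : ℕ → ℝ)

theorem eq_of_mem_Icc {m : ℕ} {t : ℝ} (ht : t ∈ Icc (m : ℝ) (m + 1)) :
    pwLinear v t = v m + (t - m) * (v (m + 1) - v m) := by
  rcases ht.2.lt_or_eq with hlt | rfl
  · rw [pwLinear, (Nat.floor_eq_iff ((Nat.cast_nonneg m).trans ht.1)).2 ⟨ht.1, hlt⟩]
  · rw [pwLinear, ← Nat.cast_succ, Nat.floor_natCast]
    push_cast
    ring

theorem natCast (m : ℕ) : pwLinear v m = v m := by
  simp [pwLinear]

theorem continuousOn_Icc (n : ℕ) : ContinuousOn (pwLinear v) (Icc 0 n) := by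
  induction n with
  | zero => simp
  | succ n ih =>
    have hpiece : ContinuousOn (pwLinear v) (Icc (n : ℝ) (n + 1)) :=
      (by fun_prop : Continuous fun t : ℝ => v n + (t - n) * (v (n + 1) - v n)).continuousOn.congr
        fun t ht => eq_of_mem_Icc v ht
    rw [Nat.cast_succ, ← Icc_union_Icc_eq_Icc (Nat.cast_nonneg n) (by linarith)]
    exact ih.union_of_isClosed hpiece isClosed_Icc isClosed_Icc

theorem hasDerivAt_of_mem_Ioo {m : ℕ} {t : ℝ} (ht : t ∈ Ioo (m : ℝ) (m + 1)) :
    HasDerivAt (pwLinear v) (v (m + 1) - v m) t := by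
  have hlocal : (fun s => v m + (s - m) * (v (m + 1) - v m)) =ᶠ[nhds t] pwLinear v := by
    filter_upwards [Ioo_mem_nhds ht.1 ht.2] with s hs
    exact (eq_of_mem_Icc v ⟨hs.1.le, hs.2.le⟩).symm
  refine HasDerivAt.congr_of_eventuallyEq ?_ hlocal.symm
  simpa using ((hasDerivAt_id t).sub_const (m : ℝ)).mul_const (v (m + 1) - v m) |>.const_add (v m)

theorem hasDerivAt {t : ℝ} (ht₀ : 0 ≤ t) (ht : t ∉ range ((↑) : ℕ → ℝ)) :
    HasDerivAt (pwLinear v) (v (⌊t⌋₊ + 1) - v ⌊t⌋₊) t :=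
  hasDerivAt_of_mem_Ioo v
    ⟨(Nat.floor_le ht₀).lt_of_ne fun h => ht ⟨_, h⟩, Nat.lt_floor_add_one t⟩

theorem deriv_ae : ∀ᵐ t, 0 ≤ t → deriv (pwLinear v) t = v (⌊t⌋₊ + 1) - v ⌊t⌋₊ := by
  filter_upwards [(countable_range ((↑) : ℕ → ℝ)).ae_notMem volume] with t ht ht₀
  exact (hasDerivAt v ht₀ ht).deriv

theorem integrableOn_deriv (b : ℝ) : IntegrableOn (deriv (pwLinear v)) (Icc 0 b) := by
  refine Measure.integrableOn_of_bounded (M := ∑ m ∈ Finset.range (⌊b⌋₊ + 1), |v (m + 1) - v m|)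
    measure_Icc_lt_top.ne (measurable_deriv _).aestronglyMeasurable ?_
  filter_upwards [ae_restrict_mem measurableSet_Icc, ae_restrict_of_ae (deriv_ae v)]
    with t ht hderiv
  rw [hderiv ht.1, Real.norm_eq_abs]
  exact Finset.single_le_sum (f := fun m => |v (m + 1) - v m|) (fun _ _ => abs_nonneg _)
    (Finset.mem_range_succ_iff.2 (Nat.floor_le_floor ht.2))

theorem integral_deriv {s b : ℝ} (hs : 0 ≤ s) (hsb : s ≤ b) :
    ∫ t in Ioo s b, deriv (pwLinear v) t = pwLinear v b - pwLinear v s := by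
  rw [← integral_Ioc_eq_integral_Ioo, ← intervalIntegral.integral_of_le hsb]
  refine integral_eq_of_hasDerivAt_off_countable_of_le _ _ hsb (countable_range ((↑) : ℕ → ℝ))
    ((continuousOn_Icc v ⌈b⌉₊).mono (Icc_subset_Icc hs (Nat.le_ceil b)))
    (fun t ht => (hasDerivAt v (hs.trans ht.1.1.le) ht.2).differentiableAt.hasDerivAt) ?_
  exact (intervalIntegrable_iff_integrableOn_Icc_of_le hsb).2
    ((integrableOn_deriv v b).mono_set (Icc_subset_Icc_left hs))

theorem integral_deriv_mul_sub_segment (u w : ℕ → ℝ) (m : ℕ) (c : ℝ) :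
    ∫ s in (m : ℝ)..m + 1, deriv (pwLinear u) s * (c - pwLinear w s)
      = (u (m + 1) - u m) * (c - (w m + w (m + 1)) / 2) := by
  have hpiece : EqOn (fun s => deriv (pwLinear u) s * (c - pwLinear w s))
      (fun s => (u (m + 1) - u m) * (c - w m - (s - m) * (w (m + 1) - w m))) (Ioo m (m + 1)) :=
    fun s hs => by
      dsimp only
      rw [(hasDerivAt_of_mem_Ioo u hs).deriv, eq_of_mem_Icc w ⟨hs.1.le, hs.2.le⟩, sub_add_eq_sub_sub]
  rw [intervalIntegral.integral_of_le (by linarith), integral_Ioc_eq_integral_Ioo,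
    setIntegral_congr_fun measurableSet_Ioo hpiece, ← integral_Ioc_eq_integral_Ioo,
    ← intervalIntegral.integral_of_le (by linarith),
    intervalIntegral.integral_comp_sub_right fun s => (u (m + 1) - u m) * (c - w m - s * _)]
  rw [sub_self, add_sub_cancel_left, intervalIntegral.integral_const_mul,
    intervalIntegral.integral_sub intervalIntegrable_const
      (intervalIntegral.intervalIntegrable_id.mul_const _),
    intervalIntegral.integral_mul_const, integral_id, intervalIntegral.integral_const]
  simp only [smul_eq_mul]
  ring

end pwLinear

noncomputable def levelTwoSum (u w : ℕ → ℝ) (n : ℕ) : ℝ :=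
  ∑ m ∈ Finset.range n, (u (m + 1) - u m) * (w n - (w m + w (m + 1)) / 2)

theorem pwLinear.integral_deriv_mul_sub (u w : ℕ → ℝ) (n : ℕ) :
    ∫ s in Ioo 0 (n : ℝ), deriv (pwLinear u) s * (pwLinear w n - pwLinear w s)
      = levelTwoSum u w n := by
  have hint : IntegrableOn (fun s => deriv (pwLinear u) s * (pwLinear w n - pwLinear w s))
      (Icc 0 n) :=
    (integrableOn_deriv u n).mul_continuousOn
      (continuousOn_const.sub (continuousOn_Icc w n)) isCompact_Icc
  rw [← integral_Ioc_eq_integral_Ioo, ← intervalIntegral.integral_of_le (Nat.cast_nonneg n),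
    ← Nat.cast_zero, ← intervalIntegral.sum_integral_adjacent_intervals]
  · simp only [Nat.cast_succ, integral_deriv_mul_sub_segment, natCast, levelTwoSum]
  · intro m hm
    refine (intervalIntegrable_iff_integrableOn_Icc_of_le (by simp)).2 (hint.mono_set ?_)
    exact Icc_subset_Icc (Nat.cast_nonneg m) (by exact_mod_cast hm)

section PiecewiseLinearPath

variable {d : ℕ} (v : Fin d → ℕ → ℝ) (n : ℕ)

theorem sigTerm_pwLinear_singleton (j : Fin d) :
    sigTerm (fun t j => pwLinear (v j) t) 0 n ![j] = v j n - v j 0 := by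
  rw [sigTerm_singleton, pwLinear.integral_deriv _ le_rfl n.cast_nonneg, pwLinear.natCast,
    ← Nat.cast_zero, pwLinear.natCast]

theorem sigTerm_pwLinear_pair (i j : Fin d) :
    sigTerm (fun t j => pwLinear (v j) t) 0 n ![i, j] = levelTwoSum (v i) (v j) n := by
  rw [sigTerm_pair _ _ _ _ _ ((pwLinear.integrableOn_deriv _ _).mono_set Ioo_subset_Icc_self)
    ((pwLinear.integrableOn_deriv _ _).mono_set Ioo_subset_Icc_self),
    ← pwLinear.integral_deriv_mul_sub]
  exact setIntegral_congr_fun measurableSet_Ioo fun s hs => by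
    rw [pwLinear.integral_deriv _ hs.1.le hs.2.le]

end PiecewiseLinearPath

section LevelTwoSum

variable (u w : ℕ → ℝ) (n : ℕ)

theorem levelTwoSum_self : levelTwoSum u u n = (u n - u 0) ^ 2 / 2 := by
  let F m := u m * u n - u m ^ 2 / 2
  calc levelTwoSum u u n = ∑ m ∈ Finset.range n, (F (m + 1) - F m) :=
        Finset.sum_congr rfl fun m _ => by ring
    _ = (u n - u 0) ^ 2 / 2 := by
        rw [Finset.sum_range_sub]
        ring

theorem levelTwoSum_add_levelTwoSum_swap :
    levelTwoSum u w n + levelTwoSum w u n = (u n - u 0) * (w n - w 0) := by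
  let F m := u m * w n + w m * u n - u m * w m
  calc levelTwoSum u w n + levelTwoSum w u n = ∑ m ∈ Finset.range n, (F (m + 1) - F m) := by
        rw [levelTwoSum, levelTwoSum, ← Finset.sum_add_distrib]
        exact Finset.sum_congr rfl fun m _ => by ring
    _ = (u n - u 0) * (w n - w 0) := by
        rw [Finset.sum_range_sub]
        ring

end LevelTwoSum

theorem Finset.sum_range_two_mul {M : Type*} [AddCommMonoid M] (f : ℕ → M) (N : ℕ) :
    ∑ m ∈ range (2 * N), f m = ∑ i ∈ range N, (f (2 * i) + f (2 * i + 1)) := by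
  induction N with
  | zero => simp
  | succ N ih => rw [Nat.mul_succ, sum_range_succ, sum_range_succ, sum_range_succ, ih, add_assoc]

noncomputable def leadLagVertex (y : ℕ → ℝ) (j : Fin 2) (m : ℕ) : ℝ :=
  ![y ((m + 1) / 2), y (m / 2)] j

namespace leadLagVertex

variable (y : ℕ → ℝ) (i : ℕ)

@[simp] theorem two_mul (j : Fin 2) : leadLagVertex y j (2 * i) = y i := by
  fin_cases j <;> simp [leadLagVertex, Nat.mul_add_div]

@[simp] theorem zero_two_mul_add_one : leadLagVertex y 0 (2 * i + 1) = y (i + 1) := by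
  simp [leadLagVertex, show (2 * i + 1 + 1) / 2 = i + 1 by omega]

@[simp] theorem one_two_mul_add_one : leadLagVertex y 1 (2 * i + 1) = y i := by
  simp [leadLagVertex, show (2 * i + 1) / 2 = i by omega]

@[simp] theorem zero (j : Fin 2) : leadLagVertex y j 0 = y 0 := by
  simpa using two_mul y 0 j

end leadLagVertex

theorem leadLagPath_eq_pwLinear (y : ℕ → ℝ) :
    leadLagPath y = fun t j => pwLinear (leadLagVertex y j) t := by
  ext t j
  fin_cases j <;> simp [leadLagPath, pwLinear, leadLagVertex, add_assoc]

theorem levelTwoSum_leadLagVertex_sub_swap (y : ℕ → ℝ) (N : ℕ) :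
    levelTwoSum (leadLagVertex y 0) (leadLagVertex y 1) (2 * N)
        - levelTwoSum (leadLagVertex y 1) (leadLagVertex y 0) (2 * N)
      = ∑ i ∈ Finset.range N, (y (i + 1) - y i) ^ 2 := by
  rw [levelTwoSum, levelTwoSum, ← Finset.sum_sub_distrib, Finset.sum_range_two_mul]
  refine Finset.sum_congr rfl fun i _ => ?_
  rw [show 2 * i + 1 + 1 = 2 * (i + 1) by ring]
  simp only [leadLagVertex.two_mul, leadLagVertex.zero_two_mul_add_one,
    leadLagVertex.one_two_mul_add_one]
  ring

section LeadLag

variable (y : ℕ → ℝ) (N : ℕ)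

theorem sigTerm_leadLagPath_eq_pwLinear {k : ℕ} (w : Fin k → Fin 2) :
    sigTerm (leadLagPath y) 0 (2 * N) w
      = sigTerm (fun t j => pwLinear (leadLagVertex y j) t) 0 (2 * N : ℕ) w := by
  rw [leadLagPath_eq_pwLinear, Nat.cast_mul, Nat.cast_ofNat]

theorem sigTerm_leadLagPath_singleton (j : Fin 2) :
    sigTerm (leadLagPath y) 0 (2 * N) ![j] = y N - y 0 := by
  rw [sigTerm_leadLagPath_eq_pwLinear, sigTerm_pwLinear_singleton, leadLagVertex.two_mul,
    leadLagVertex.zero]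

theorem sigTerm_leadLagPath_pair_self (j : Fin 2) :
    sigTerm (leadLagPath y) 0 (2 * N) ![j, j] = (y N - y 0) ^ 2 / 2 := by
  rw [sigTerm_leadLagPath_eq_pwLinear, sigTerm_pwLinear_pair, levelTwoSum_self,
    leadLagVertex.two_mul, leadLagVertex.zero]

theorem sigTerm_leadLagPath_add_swap :
    sigTerm (leadLagPath y) 0 (2 * N) ![0, 1] + sigTerm (leadLagPath y) 0 (2 * N) ![1, 0]
      = (y N - y 0) ^ 2 := by
  simp only [sigTerm_leadLagPath_eq_pwLinear, sigTerm_pwLinear_pair,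
    levelTwoSum_add_levelTwoSum_swap, leadLagVertex.two_mul, leadLagVertex.zero, sq]

theorem sigTerm_leadLagPath_sub_swap :
    sigTerm (leadLagPath y) 0 (2 * N) ![0, 1] - sigTerm (leadLagPath y) 0 (2 * N) ![1, 0]
      = ∑ i ∈ Finset.range N, (y (i + 1) - y i) ^ 2 := by
  simp only [sigTerm_leadLagPath_eq_pwLinear, sigTerm_pwLinear_pair,
    levelTwoSum_leadLagVertex_sub_swap]

end LeadLag

theorem cumsum_leadLag_signature_level_two_general (N : ℕ) (x : ℕ → ℝ) :
    let Z := leadLagPath fun i => ∑ j ∈ Finset.range i, x (j + 1)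
    sigTerm Z 0 (2 * N) ![0] = ∑ i ∈ Finset.range N, x (i + 1) ∧
    sigTerm Z 0 (2 * N) ![1] = ∑ i ∈ Finset.range N, x (i + 1) ∧
    sigTerm Z 0 (2 * N) ![0, 0] = (∑ i ∈ Finset.range N, x (i + 1)) ^ 2 / 2 ∧
    sigTerm Z 0 (2 * N) ![1, 1] = (∑ i ∈ Finset.range N, x (i + 1)) ^ 2 / 2 ∧
    sigTerm Z 0 (2 * N) ![0, 1]
      = ((∑ i ∈ Finset.range N, x (i + 1)) ^ 2 + ∑ i ∈ Finset.range N, x (i + 1) ^ 2) / 2 ∧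
    sigTerm Z 0 (2 * N) ![1, 0]
      = ((∑ i ∈ Finset.range N, x (i + 1)) ^ 2 - ∑ i ∈ Finset.range N, x (i + 1) ^ 2) / 2 := by
  intro Z
  set y : ℕ → ℝ := fun i => ∑ j ∈ Finset.range i, x (j + 1)
  have hy₀ : y 0 = 0 := Finset.sum_range_zero _
  have hincr (i : ℕ) : y (i + 1) - y i = x (i + 1) := by simp [y, Finset.sum_range_succ]
  have hsum := sigTerm_leadLagPath_add_swap y N
  have hdiff := sigTerm_leadLagPath_sub_swap y N
  simp only [hy₀, hincr, sub_zero] at hsum hdiff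
  refine ⟨?_, ?_, ?_, ?_, ?_, ?_⟩
  · simpa [hy₀] using sigTerm_leadLagPath_singleton y N 0
  · simpa [hy₀] using sigTerm_leadLagPath_singleton y N 1
  · simpa [hy₀] using sigTerm_leadLagPath_pair_self y N 0
  · simpa [hy₀] using sigTerm_leadLagPath_pair_self y N 1
  · linarith
  · linarith

/-- Second-level signature of the cumulative-sum lead-lag embedding: with
`x̃_i = x₁ + ⋯ + x_i` (and `x̃₀ = 0`) and `Z` the lead-lag path of
`x̃₀,…,x̃_N`, one has `S^1 = S^2 = Σ x_i`, `S^{1,1} = S^{2,2} = ½(Σ x_i)²`,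
`S^{1,2} = ½((Σ x_i)² + Σ x_i²)` and `S^{2,1} = ½((Σ x_i)² − Σ x_i²)`. -/
theorem cumsum_leadLag_signature_level_two (N : ℕ) (hN : 1 ≤ N) (x : ℕ → ℝ) :
    let Z := leadLagPath fun i => ∑ j ∈ Finset.range i, x (j + 1)
    sigTerm Z 0 (2 * N) ![0] = ∑ i ∈ Finset.range N, x (i + 1) ∧
    sigTerm Z 0 (2 * N) ![1] = ∑ i ∈ Finset.range N, x (i + 1) ∧
    sigTerm Z 0 (2 * N) ![0, 0] = (∑ i ∈ Finset.range N, x (i + 1)) ^ 2 / 2 ∧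
    sigTerm Z 0 (2 * N) ![1, 1] = (∑ i ∈ Finset.range N, x (i + 1)) ^ 2 / 2 ∧
    sigTerm Z 0 (2 * N) ![0, 1]
      = ((∑ i ∈ Finset.range N, x (i + 1)) ^ 2 + ∑ i ∈ Finset.range N, x (i + 1) ^ 2) / 2 ∧
    sigTerm Z 0 (2 * N) ![1, 0]
      = ((∑ i ∈ Finset.range N, x (i + 1)) ^ 2 - ∑ i ∈ Finset.range N, x (i + 1) ^ 2) / 2 :=
  cumsum_leadLag_signature_level_two_general N x
end
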